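/- Suppose a random variable T_p satisfies, for all x and m, the comparison T_p ≤ T₁ + Σ_{i=1}^{T₁} D_i where T₁ is a nonnegative integer random variable with P(T₁ ≥ m) ≤ α·exp(-m^β) for constants α, β > 0, and D₁, D₂, ... are i.i.d. geometric(p) variables (possibly dependent on T₁). Then there exist constants α' > 0 and c > 0 such that P(T_p ≥ 4m/p) ≤ α'·exp(-c·m^β') for some β' > 0 and all m ∈ N. -/

import Mathlib

/-!
If `T_p ≥ 4m/p`, then either `T₁ ≥ m`, whose probability is controlled by the assumed tail of
`T₁`, or `T₁ < m` and the first `m` geometric delays sum to at least `3m/p`. The latter has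
probability at most `e^{-m/2}` by a Chernoff bound: for `r = 1/(1 - p/2)` one has
`E[r^D] = 2` and `r ≥ e^{p/2}`, so Markov's inequality for `r^{D₁ + ⋯ + Dₘ}` gives
`2^m e^{-3m/2} ≤ e^{-m/2}`. Finally `α e^{-m^β} + e^{-m/2} ≤ (α + 1) e^{-m^{min β 1}/2}`.
-/

open MeasureTheory ProbabilityTheory Finset
open scoped ENNReal

section Geometric

variable {Ω : Type*} [MeasurableSpace Ω] {μ : Measure Ω}

theorem lintegral_comp_eq_tsum_measure_preimage {β : Type*} [MeasurableSpace β] [Countable β]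
    [MeasurableSingletonClass β] {X : Ω → β} (hX : Measurable X) (f : β → ℝ≥0∞) :
    ∫⁻ ω, f (X ω) ∂μ = ∑' b, f b * μ (X ⁻¹' {b}) := by
  rw [← lintegral_map (measurable_of_countable f) hX, lintegral_countable']
  simp_rw [Measure.map_apply hX (measurableSet_singleton _)]

theorem tsum_ofReal_geometric_mul {q a : ℝ} (hq0 : 0 ≤ q) (hq1 : q < 1) (ha : 0 ≤ a) :
    ∑' k : ℕ, ENNReal.ofReal (q ^ k * a) = ENNReal.ofReal (a / (1 - q)) := by
  rw [← ENNReal.ofReal_tsum_of_nonneg (fun k => by positivity)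
    ((summable_geometric_of_lt_one hq0 hq1).mul_right a), tsum_mul_right,
    tsum_geometric_of_lt_one hq0 hq1, div_eq_inv_mul]

variable [IsProbabilityMeasure μ] {p : ℝ} {D : Ω → ℕ}

theorem measure_eq_zero_of_geometric (hp0 : 0 < p) (hp1 : p ≤ 1) (hD : Measurable D)
    (hgeom : ∀ k : ℕ, μ {ω | D ω = k + 1} = ENNReal.ofReal ((1 - p) ^ k * p)) :
    μ {ω | D ω = 0} = 0 := by
  have htotal := lintegral_comp_eq_tsum_measure_preimage (μ := μ) hD 1
  simp only [Pi.one_apply, one_mul, lintegral_one, measure_univ] at htotal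
  rw [tsum_eq_zero_add' ENNReal.summable] at htotal
  have hsucc : ∑' k : ℕ, μ (D ⁻¹' {k + 1}) = 1 := by
    simp only [Set.preimage, Set.mem_singleton_iff, hgeom]
    rw [tsum_ofReal_geometric_mul (by linarith) (by linarith) hp0.le, sub_sub_cancel,
      div_self hp0.ne', ENNReal.ofReal_one]
  rw [hsucc] at htotal
  exact (ENNReal.add_left_inj ENNReal.one_ne_top).mp (htotal.symm.trans (zero_add 1).symm)

theorem lintegral_pow_of_geometric (hp0 : 0 < p) (hp1 : p ≤ 1) (hD : Measurable D)
    (hgeom : ∀ k : ℕ, μ {ω | D ω = k + 1} = ENNReal.ofReal ((1 - p) ^ k * p))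
    {r : ℝ} (hr0 : 0 ≤ r) (hr1 : r * (1 - p) < 1) :
    ∫⁻ ω, ENNReal.ofReal r ^ D ω ∂μ = ENNReal.ofReal (r * p / (1 - r * (1 - p))) := by
  have hterm : ∀ k : ℕ, ENNReal.ofReal r ^ (k + 1) * μ {ω | D ω = k + 1}
      = ENNReal.ofReal ((r * (1 - p)) ^ k * (r * p)) := by
    intro k
    rw [hgeom, ← ENNReal.ofReal_pow hr0, ← ENNReal.ofReal_mul (by positivity), mul_pow]
    ring_nf
  rw [lintegral_comp_eq_tsum_measure_preimage hD, tsum_eq_zero_add' ENNReal.summable]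
  simp only [Set.preimage, Set.mem_singleton_iff, measure_eq_zero_of_geometric hp0 hp1 hD hgeom,
    mul_zero, zero_add, hterm]
  exact tsum_ofReal_geometric_mul (by nlinarith) hr1 (by positivity)

theorem lintegral_pow_eq_two_of_geometric (hp0 : 0 < p) (hp1 : p ≤ 1) (hD : Measurable D)
    (hgeom : ∀ k : ℕ, μ {ω | D ω = k + 1} = ENNReal.ofReal ((1 - p) ^ k * p)) :
    ∫⁻ ω, ENNReal.ofReal (1 / (1 - p / 2)) ^ D ω ∂μ = ENNReal.ofReal 2 := by
  have hq : 0 < 1 - p / 2 := by linarith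
  have hr : 1 / (1 - p / 2) * (1 - p / 2) = 1 := one_div_mul_cancel hq.ne'
  have hrq : 1 / (1 - p / 2) * (1 - p) < 1 := by
    rw [one_div_mul_eq_div, div_lt_one hq]
    linarith
  rw [lintegral_pow_of_geometric hp0 hp1 hD hgeom (one_div_pos.mpr hq).le hrq,
    show 1 - 1 / (1 - p / 2) * (1 - p) = 1 / (1 - p / 2) * p / 2 by linear_combination -hr,
    div_div_cancel₀ (by positivity)]

end Geometric

section Chernoff

variable {Ω ι : Type*} [MeasurableSpace Ω] {μ : Measure Ω}

theorem mul_measure_le_sum_le_prod_lintegral {X : ι → Ω → ℕ} (hX : ∀ i, Measurable (X i))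
    (hindep : iIndepFun X μ) {R : ℝ≥0∞} (hR : 1 ≤ R) (s : Finset ι) (N : ℕ) :
    R ^ N * μ {ω | N ≤ ∑ i ∈ s, X i ω} ≤ ∏ i ∈ s, ∫⁻ ω, R ^ X i ω ∂μ := by
  have hpow : Measurable fun n : ℕ => R ^ n := measurable_of_countable _
  calc R ^ N * μ {ω | N ≤ ∑ i ∈ s, X i ω}
      ≤ R ^ N * μ {ω | R ^ N ≤ ∏ i ∈ s, R ^ X i ω} := by
        refine mul_le_mul_right (measure_mono fun ω (hω : N ≤ _) => ?_) _
        rw [Set.mem_ofPred_eq, prod_pow_eq_pow_sum]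
        exact pow_le_pow_right₀ hR hω
    _ ≤ ∫⁻ ω, ∏ i ∈ s, R ^ X i ω ∂μ :=
        mul_meas_ge_le_lintegral₀
          (s.measurable_prod fun i _ => hpow.comp (hX i)).aemeasurable _
    _ = ∏ i ∈ s, ∫⁻ ω, R ^ X i ω ∂μ :=
        lintegral_prod_eq_prod_lintegral_of_indepFun s _ (hindep.comp _ fun _ => hpow)
          fun i => hpow.comp (hX i)

theorem measure_sum_geometric_ge_le [IsProbabilityMeasure μ] {p : ℝ} (hp0 : 0 < p)
    (hp1 : p ≤ 1) {D : ℕ → Ω → ℕ} (hD : ∀ i, Measurable (D i)) (hindep : iIndepFun D μ)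
    (hgeom : ∀ i, ∀ k : ℕ, μ {ω | D i ω = k + 1} = ENNReal.ofReal ((1 - p) ^ k * p)) (m : ℕ) :
    μ {ω | 3 * (m : ℝ) / p ≤ ∑ i ∈ range m, (D i ω : ℝ)}
      ≤ ENNReal.ofReal (Real.exp (-(m / 2))) := by
  obtain ⟨r, hr⟩ : ∃ r : ℝ, r = 1 / (1 - p / 2) := ⟨_, rfl⟩
  have hr1 : 1 ≤ r := by rw [hr, le_div_iff₀ (by linarith)]; linarith
  have hmgf : ∀ i, ∫⁻ ω, ENNReal.ofReal r ^ D i ω ∂μ = ENNReal.ofReal 2 := fun i =>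
    hr ▸ lintegral_pow_eq_two_of_geometric hp0 hp1 (hD i) (hgeom i)
  set N := ⌈3 * (m : ℝ) / p⌉₊
  have hchernoff := mul_measure_le_sum_le_prod_lintegral hD hindep
    (ENNReal.one_le_ofReal.mpr hr1) (range m) N
  rw [prod_congr rfl fun i _ => hmgf i, prod_const, card_range] at hchernoff
  have hsub : {ω | 3 * (m : ℝ) / p ≤ ∑ i ∈ range m, (D i ω : ℝ)}
      ⊆ {ω | N ≤ ∑ i ∈ range m, D i ω} := fun ω hω =>
    Nat.ceil_le.mpr (by exact_mod_cast hω)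
  have hpowN : Real.exp (3 * m / 2) ≤ r ^ N := by
    have hN : 3 * (m : ℝ) ≤ N * p := (div_le_iff₀ hp0).mp (Nat.le_ceil _)
    calc Real.exp (3 * m / 2) ≤ Real.exp (N * (p / 2)) := Real.exp_le_exp.mpr (by linarith)
      _ = Real.exp (p / 2) ^ N := Real.exp_nat_mul _ N
      _ ≤ r ^ N := pow_le_pow_left₀ (Real.exp_pos _).le (hr ▸
          Real.exp_bound_div_one_sub_of_interval (x := p / 2) (by linarith) (by linarith)) N
  have hpow2 : (2 : ℝ) ^ m ≤ Real.exp m := by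
    rw [← Real.exp_one_pow]
    exact pow_le_pow_left₀ zero_le_two (by linarith [Real.add_one_le_exp 1]) m
  rw [← ENNReal.mul_le_mul_iff_right (ENNReal.ofReal_pos.mpr (Real.exp_pos (3 * m / 2))).ne'
    ENNReal.ofReal_ne_top, ← ENNReal.ofReal_mul (Real.exp_pos _).le, ← Real.exp_add]
  calc ENNReal.ofReal (Real.exp (3 * m / 2))
        * μ {ω | 3 * (m : ℝ) / p ≤ ∑ i ∈ range m, (D i ω : ℝ)}
      ≤ ENNReal.ofReal r ^ N * μ {ω | N ≤ ∑ i ∈ range m, D i ω} := by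
        rw [← ENNReal.ofReal_pow (by linarith)]
        gcongr
    _ ≤ ENNReal.ofReal 2 ^ m := hchernoff
    _ ≤ ENNReal.ofReal (Real.exp (3 * m / 2 + -(m / 2))) := by
        rw [← ENNReal.ofReal_pow zero_le_two]
        exact ENNReal.ofReal_le_ofReal (by ring_nf; exact hpow2)

end Chernoff

theorem le_or_le_sum_of_le_add_sum {p t : ℝ} (hp0 : 0 < p) (hp1 : p ≤ 1) {k m : ℕ}
    {d : ℕ → ℝ} (hd : ∀ i, 0 ≤ d i) (ht : t ≤ k + ∑ i ∈ range k, d i) (hm : 4 * m / p ≤ t) :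
    m ≤ k ∨ 3 * m / p ≤ ∑ i ∈ range m, d i := by
  refine (le_or_gt m k).imp_right fun hkm => ?_
  have hsum : ∑ i ∈ range k, d i ≤ ∑ i ∈ range m, d i :=
    sum_le_sum_of_subset_of_nonneg (range_subset_range.mpr hkm.le) fun i _ _ => hd i
  have hkm' : (k : ℝ) ≤ m := by exact_mod_cast hkm.le
  have hmp : (m : ℝ) ≤ m / p := le_div_self (Nat.cast_nonneg m) hp0 hp1
  have : 4 * (m : ℝ) / p = 3 * m / p + m / p := by ring
  linarith

theorem natCast_rpow_le_rpow_of_exponent_le (n : ℕ) {y z : ℝ} (hy : 0 < y) (hyz : y ≤ z) :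
    (n : ℝ) ^ y ≤ (n : ℝ) ^ z := by
  rcases n.eq_zero_or_pos with rfl | hn
  · simp [Real.zero_rpow hy.ne', Real.zero_rpow (hy.trans_le hyz).ne']
  · exact Real.rpow_le_rpow_of_exponent_le (by exact_mod_cast hn) hyz

theorem add_exp_le_mul_exp_rpow_min {α β : ℝ} (hα : 0 ≤ α) (hβ : 0 < β) (m : ℕ) :
    α * Real.exp (-(m : ℝ) ^ β) + Real.exp (-(m / 2))
      ≤ (α + 1) * Real.exp (-(1 / 2) * (m : ℝ) ^ min β 1) := by
  have hmin : 0 < min β 1 := lt_min hβ one_pos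
  have hle_β := natCast_rpow_le_rpow_of_exponent_le m hmin (min_le_left β 1)
  have hle_one := natCast_rpow_le_rpow_of_exponent_le m hmin (min_le_right β 1)
  rw [Real.rpow_one] at hle_one
  have hnonneg : 0 ≤ (m : ℝ) ^ min β 1 := by positivity
  have h₁ : Real.exp (-(m : ℝ) ^ β) ≤ Real.exp (-(1 / 2) * (m : ℝ) ^ min β 1) :=
    Real.exp_le_exp.mpr (by linarith)
  have h₂ : Real.exp (-(m / 2)) ≤ Real.exp (-(1 / 2) * (m : ℝ) ^ min β 1) :=
    Real.exp_le_exp.mpr (by linarith)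
  nlinarith

theorem stmt_8_general {Ω : Type*} [MeasurableSpace Ω] (μ : Measure Ω) [IsProbabilityMeasure μ]
    (p : ℝ) (hp : p ∈ Set.Ioc (0 : ℝ) 1)
    (Tp T₁ : Ω → ℕ)
    (α β : ℝ) (hα : 0 < α) (hβ : 0 < β)
    (htail : ∀ m : ℕ, μ {ω | m ≤ T₁ ω} ≤ ENNReal.ofReal (α * Real.exp (-(m : ℝ) ^ β)))
    (D : ℕ → Ω → ℕ) (hDmeas : ∀ i, Measurable (D i))
    (hindep : iIndepFun D μ)
    (hgeom : ∀ i, ∀ k : ℕ, μ {ω | D i ω = k + 1} = ENNReal.ofReal ((1 - p) ^ k * p))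
    (hcompare : ∀ ω, (Tp ω : ℝ) ≤ (T₁ ω : ℝ) + ∑ i ∈ Finset.range (T₁ ω), (D i ω : ℝ)) :
    ∃ (α' c β' : ℝ), 0 < α' ∧ 0 < c ∧ 0 < β' ∧
      ∀ m : ℕ, μ {ω | 4 * (m : ℝ) / p ≤ (Tp ω : ℝ)} ≤
        ENNReal.ofReal (α' * Real.exp (-c * (m : ℝ) ^ β')) := by
  obtain ⟨hp0, hp1⟩ := hp
  refine ⟨α + 1, 1 / 2, min β 1, by linarith, by norm_num, lt_min hβ one_pos, fun m => ?_⟩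
  have hsplit : {ω | 4 * (m : ℝ) / p ≤ (Tp ω : ℝ)} ⊆
      {ω | m ≤ T₁ ω} ∪ {ω | 3 * (m : ℝ) / p ≤ ∑ i ∈ range m, (D i ω : ℝ)} := fun ω hω =>
    le_or_le_sum_of_le_add_sum hp0 hp1 (fun i => Nat.cast_nonneg (D i ω)) (hcompare ω) hω
  calc μ {ω | 4 * (m : ℝ) / p ≤ (Tp ω : ℝ)}
      ≤ μ {ω | m ≤ T₁ ω} + μ {ω | 3 * (m : ℝ) / p ≤ ∑ i ∈ range m, (D i ω : ℝ)} :=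
        (measure_mono hsplit).trans (measure_union_le _ _)
    _ ≤ ENNReal.ofReal (α * Real.exp (-(m : ℝ) ^ β)) + ENNReal.ofReal (Real.exp (-(m / 2))) :=
        add_le_add (htail m) (measure_sum_geometric_ge_le hp0 hp1 hDmeas hindep hgeom m)
    _ ≤ ENNReal.ofReal ((α + 1) * Real.exp (-(1 / 2) * (m : ℝ) ^ min β 1)) := by
        rw [← ENNReal.ofReal_add (by positivity) (by positivity)]
        exact ENNReal.ofReal_le_ofReal (add_exp_le_mul_exp_rpow_min hα.le hβ m)

/-- Coupling estimate: if `T_p ≤ T₁ + Σ_{i<T₁} D_i` where `T₁` has a stretched-exponential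
tail and the `D_i` are i.i.d. geometric(`p`) delays, then `T_p` also has a
stretched-exponential tail: `P(T_p ≥ 4m/p) ≤ α'·exp(-c·m^{β'})` for all `m`. -/
theorem stmt_8 {Ω : Type*} [MeasurableSpace Ω] (μ : Measure Ω) [IsProbabilityMeasure μ]
    (p : ℝ) (hp : p ∈ Set.Ioc (0 : ℝ) 1)
    (Tp T₁ : Ω → ℕ) (hTp : Measurable Tp) (hT₁ : Measurable T₁)
    (α β : ℝ) (hα : 0 < α) (hβ : 0 < β)
    (htail : ∀ m : ℕ, μ {ω | m ≤ T₁ ω} ≤ ENNReal.ofReal (α * Real.exp (-(m : ℝ) ^ β)))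
    (D : ℕ → Ω → ℕ) (hDmeas : ∀ i, Measurable (D i))
    (hindep : iIndepFun D μ)
    (hgeom : ∀ i, ∀ k : ℕ, μ {ω | D i ω = k + 1} = ENNReal.ofReal ((1 - p) ^ k * p))
    (hcompare : ∀ ω, (Tp ω : ℝ) ≤ (T₁ ω : ℝ) + ∑ i ∈ Finset.range (T₁ ω), (D i ω : ℝ)) :
    ∃ (α' c β' : ℝ), 0 < α' ∧ 0 < c ∧ 0 < β' ∧
      ∀ m : ℕ, μ {ω | 4 * (m : ℝ) / p ≤ (Tp ω : ℝ)} ≤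
        ENNReal.ofReal (α' * Real.exp (-c * (m : ℝ) ^ β')) :=
  stmt_8_general μ p hp Tp T₁ α β hα hβ htail D hDmeas hindep hgeom hcompare
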